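/- Let w and w' be left preferred Gauss codes on n letters. Then w and w' are orientedly equivalent as Gauss codes if and only if w' = (shift^LP)^k(w) for some integer k ≥ 0; and w and w' are unorientedly equivalent as Gauss codes if and only if w' = (shift^LP)^k(w) or w' = (shift^LP)^k(rev^LP(w)) for some integer k ≥ 0. -/

import Mathlib

/-- A Gauss code on `n` letters: a bijection from the `2*n` positions to
letters paired with a side (`false` = L, `true` = R). -/
abbrev GaussCode (n : ℕ) := Fin (2 * n) ≃ Fin n × Bool

instance (n : ℕ) [NeZero n] : NeZero (2 * n) := ⟨by have := NeZero.ne n; omega⟩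

namespace GaussCode

variable {n : ℕ}

/-- `π_*(w)`: relabel the letters by the permutation `π`. -/
def permAct (π : Equiv.Perm (Fin n)) (w : GaussCode n) : GaussCode n :=
  w.trans (π.prodCongr (Equiv.refl Bool))

open Fin.NatCast in
/-- `shift[m](w)`: the code whose entry at position `i` is the entry of `w` at
position `i + m` (mod `2n`). -/
def shift [NeZero n] (m : ℕ) (w : GaussCode n) : GaussCode n :=
  (Equiv.addRight ((m : Fin (2 * n)))).trans w

/-- `rev(w)`: the code whose entry at position `i` is the entry of `w` at
position `2n - 1 - i`. -/
def rev (w : GaussCode n) : GaussCode n :=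
  (Fin.revPerm).trans w

/-- A Gauss code is left preferred if its `L`-entries appear in the order
`(1,L), (2,L), …, (n,L)` and its entry at position `0` is `(1,L)`. -/
def IsLeftPreferred [NeZero n] (w : GaussCode n) : Prop :=
  StrictMono (fun j : Fin n => w.symm (j, false)) ∧ w 0 = (0, false)

/-- `proj^LP(w)`: relabel letters in the order of appearance of their `L`-entries,
then rotate so that `(1,L)` is at position `0`. -/
def projLP [NeZero n] (w : GaussCode n) : GaussCode n :=
  let π : Equiv.Perm (Fin n) := (Tuple.sort (fun j : Fin n => w.symm (j, false)))⁻¹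
  let w' := permAct π w
  shift ((w'.symm ((0 : Fin n), false)).val) w'

/-- `shift^LP(w) := proj^LP(shift[1](w))`. -/
def shiftLP [NeZero n] (w : GaussCode n) : GaussCode n :=
  projLP (shift 1 w)

/-- `rev^LP(w) := proj^LP(rev(w))`. -/
def revLP [NeZero n] (w : GaussCode n) : GaussCode n :=
  projLP (rev w)

/-- The value of an entry in the order `(1,L) < (1,R) < (2,L) < (2,R) < …`. -/
def entryKey (e : Fin n × Bool) : ℕ :=
  2 * e.1.val + (if e.2 then 1 else 0)

/-- Lexicographic (strict) order on Gauss codes, comparing entries position by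
position in the order `(1,L) < (1,R) < (2,L) < (2,R) < …`. -/
def lexLt (w w' : GaussCode n) : Prop :=
  ∃ i : Fin (2 * n), (∀ k, k < i → w k = w' k) ∧ entryKey (w i) < entryKey (w' i)

/-- Lexicographic order on Gauss codes. -/
def lexLe (w w' : GaussCode n) : Prop :=
  w = w' ∨ lexLt w w'

/-- A left preferred Gauss code is left canonical if it is the smallest element
of its `shift^LP`-orbit `{w, shift^LP(w), …, (shift^LP)^{n-1}(w)}`. -/
def IsLeftCanonical [NeZero n] (w : GaussCode n) : Prop :=
  IsLeftPreferred w ∧ ∀ k < n, lexLe w (shiftLP^[k] w)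

/-- `proj^LC(w)`: the smallest element of the `shift^LP`-orbit of `proj^LP(w)`. -/
noncomputable def projLC [NeZero n] (w : GaussCode n) : GaussCode n :=
  letI := Classical.propDecidable
  if h : ∃ v : GaussCode n, (∃ k < n, v = shiftLP^[k] (projLP w)) ∧
      ∀ k < n, lexLe v (shiftLP^[k] (projLP w))
  then h.choose else projLP w

/-- `rev^LC(w) := proj^LC(rev(w))`. -/
noncomputable def revLC [NeZero n] (w : GaussCode n) : GaussCode n :=
  projLC (rev w)

/-- Oriented equivalence of Gauss codes: `w' = shift[m](π_*(w))` for some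
permutation `π` and integer `m`. -/
def OrientedEquiv [NeZero n] (w w' : GaussCode n) : Prop :=
  ∃ (π : Equiv.Perm (Fin n)) (m : ℕ), w' = shift m (permAct π w)

/-- Unoriented equivalence: `w` is orientedly equivalent to `w'` or to `rev(w')`. -/
def UnorientedEquiv [NeZero n] (w w' : GaussCode n) : Prop :=
  OrientedEquiv w w' ∨ OrientedEquiv w (rev w')

/-- A Gauss code is 1-reducible if two cyclically adjacent entries share the same letter. -/
def OneReducible [NeZero n] (w : GaussCode n) : Prop :=
  ∃ i : Fin (2 * n), (w i).1 = (w (i + 1)).1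

/-- A Gauss code is 2-reducible (cyclically, with `L = false`, `R = true`). -/
def TwoReducible [NeZero n] (w : GaussCode n) : Prop :=
  ∃ (i i' : Fin (2 * n)) (j k : Fin n), j ≠ k ∧
    ((w i = (j, false) ∧ w (i + 1) = (k, true) ∧
        w i' = (j, true) ∧ w (i' + 1) = (k, false)) ∨
     (w i = (j, false) ∧ w (i + 1) = (k, true) ∧
        w i' = (k, false) ∧ w (i' + 1) = (j, true)) ∨
     (w i = (j, true) ∧ w (i + 1) = (k, false) ∧
        w i' = (k, true) ∧ w (i' + 1) = (j, false)))

/-- A Gauss code is minimal if it is neither 1-reducible nor 2-reducible. -/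
def IsMinimal [NeZero n] (w : GaussCode n) : Prop :=
  ¬ OneReducible w ∧ ¬ TwoReducible w

/-- `σ_w`: the involution of positions sending each position to the unique other
position carrying the same letter. -/
def sigmaMap (w : GaussCode n) : Fin (2 * n) → Fin (2 * n) :=
  fun i => w.symm ((w i).1, !(w i).2)

/-- `h_w`: the side (`false` = L, `true` = R) of the entry at each position. -/
def hMap (w : GaussCode n) : Fin (2 * n) → Bool :=
  fun i => (w i).2

end GaussCode

/-!
Rotating a code by one step changes its left preferred projection only when the rotated-away
entry is an `L`-entry: otherwise the relative order of the `L`-entries, hence the relabelling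
done by `proj^LP`, is unchanged. Hence `proj^LP(shift[m](w))` runs through the `shift^LP`-orbit
of `proj^LP(w)`, and every element of that orbit arises this way. Since `proj^LP` forgets
relabellings and fixes left preferred codes, this identifies oriented equivalence classes of left
preferred codes with `shift^LP`-orbits; the unoriented case follows because `rev` commutes with
relabelling and turns shifts into shifts.
-/

namespace GaussCode

variable {n : ℕ}

def posL (w : GaussCode n) (j : Fin n) : Fin (2 * n) := w.symm (j, false)

theorem posL_injective (w : GaussCode n) : Function.Injective (posL w) := fun a b h => by
  simpa [posL] using congrArg w h

theorem permAct_permAct (σ τ : Equiv.Perm (Fin n)) (w : GaussCode n) :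
    permAct σ (permAct τ w) = permAct (σ * τ) w := rfl

theorem eq_one_of_strictMono_posL {u : GaussCode n} {σ : Equiv.Perm (Fin n)}
    (hu : StrictMono (posL u)) (hσ : StrictMono (posL (permAct σ u))) : σ = 1 := by
  have : Monotone ⇑(σ⁻¹ : Equiv.Perm (Fin n)) := fun i j hij => hu.le_iff_le.1 (hσ.monotone hij)
  exact inv_eq_one.1 ((Equiv.Perm.monotone_iff _).1 this)

theorem strictMono_posL_permAct_sort (w : GaussCode n) :
    StrictMono (posL (permAct (Tuple.sort (posL w))⁻¹ w)) :=
  (Tuple.monotone_sort (posL w)).strictMono_of_injective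
    ((posL_injective w).comp (Equiv.injective _))

theorem rev_permAct (π : Equiv.Perm (Fin n)) (w : GaussCode n) :
    rev (permAct π w) = permAct π (rev w) := rfl

theorem rev_rev (w : GaussCode n) : rev (rev w) = w :=
  Equiv.ext fun i => by simp [rev]

variable [NeZero n]

open Fin.NatCast

theorem shift_apply (m : ℕ) (w : GaussCode n) (i : Fin (2 * n)) :
    shift m w i = w (i + (m : Fin (2 * n))) := rfl

theorem posL_shift (m : ℕ) (w : GaussCode n) (j : Fin n) :
    posL (shift m w) j = posL w j - (m : Fin (2 * n)) := by
  simp [posL, shift, sub_eq_add_neg]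

theorem shift_congr {a b : ℕ} (h : (a : Fin (2 * n)) = b) (w : GaussCode n) :
    shift a w = shift b w := by
  rw [shift, h, shift]

theorem shift_zero (w : GaussCode n) : shift 0 w = w :=
  Equiv.ext fun i => by rw [shift_apply, Nat.cast_zero, add_zero]

theorem shift_shift (a b : ℕ) (w : GaussCode n) : shift a (shift b w) = shift (a + b) w :=
  Equiv.ext fun i => by rw [shift_apply, shift_apply, shift_apply, Nat.cast_add, add_assoc]

theorem permAct_shift (π : Equiv.Perm (Fin n)) (m : ℕ) (w : GaussCode n) :
    permAct π (shift m w) = shift m (permAct π w) := rfl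

theorem rev_shift (m : ℕ) (w : GaussCode n) :
    rev (shift m w) = shift (-(m : Fin (2 * n))).val (rev w) :=
  Equiv.ext fun i => by simp [rev, shift, Fin.rev_add]

theorem projLP_eq_of_strictMono {w : GaussCode n} {π : Equiv.Perm (Fin n)}
    (hπ : StrictMono (posL (permAct π w))) :
    projLP w = shift (posL (permAct π w) 0).val (permAct π w) := by
  set σ := (Tuple.sort (posL w))⁻¹
  have hσ : StrictMono (posL (permAct σ w)) := strictMono_posL_permAct_sort w
  have h1 : π * σ⁻¹ = 1 := by
    refine eq_one_of_strictMono_posL hσ ?_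
    rwa [permAct_permAct, inv_mul_cancel_right]
  rw [mul_inv_eq_one.1 h1]
  rfl

theorem exists_projLP_eq (w : GaussCode n) :
    ∃ (c : ℕ) (π : Equiv.Perm (Fin n)), projLP w = shift c (permAct π w) :=
  ⟨_, _, projLP_eq_of_strictMono (strictMono_posL_permAct_sort w)⟩

theorem projLP_eq_shift_of_strictMono {u : GaussCode n} (hu : StrictMono (posL u)) :
    projLP u = shift (posL u 0).val u :=
  projLP_eq_of_strictMono (π := 1) hu

theorem projLP_eq_self {w : GaussCode n} (hw : IsLeftPreferred w) : projLP w = w := by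
  have h0 : posL w 0 = 0 := by rw [posL, ← hw.2, Equiv.symm_apply_apply]
  rw [projLP_eq_shift_of_strictMono hw.1, h0, Fin.val_zero, shift_zero]

theorem projLP_permAct (τ : Equiv.Perm (Fin n)) (w : GaussCode n) :
    projLP (permAct τ w) = projLP w := by
  have hσ := strictMono_posL_permAct_sort w
  have h : permAct ((Tuple.sort (posL w))⁻¹ * τ⁻¹) (permAct τ w) =
      permAct (Tuple.sort (posL w))⁻¹ w := by
    rw [permAct_permAct, inv_mul_cancel_right]
  rw [projLP_eq_of_strictMono hσ, projLP_eq_of_strictMono (h ▸ hσ), h]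

theorem projLP_shift_one_of_snd_eq_true {u : GaussCode n} (hu : StrictMono (posL u))
    (h : (u 0).2 = true) : projLP (shift 1 u) = projLP u := by
  have hne : ∀ j, posL u j ≠ 0 := fun j hj => by
    rw [posL, Equiv.symm_apply_eq] at hj
    simp [← hj] at h
  have hmono : StrictMono (posL (shift 1 u)) := fun i j hij => by
    have := hu hij
    simp only [posL_shift, Nat.cast_one, Fin.lt_def, Fin.val_sub_one_of_ne_zero (hne _)] at this ⊢
    have := Fin.pos_iff_ne_zero.2 (hne i)
    omega
  rw [projLP_eq_shift_of_strictMono hmono, projLP_eq_shift_of_strictMono hu, shift_shift]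
  exact shift_congr (by simp [posL_shift]) u

theorem projLP_of_snd_eq_false {u : GaussCode n} (hu : StrictMono (posL u))
    (h : (u 0).2 = false) : projLP u = u := by
  have h0 : posL u (u 0).1 = 0 := by rw [posL, ← h, Equiv.symm_apply_apply]
  have hmin : posL u 0 = 0 := le_antisymm (h0 ▸ hu.monotone (Fin.zero_le _)) (Fin.zero_le _)
  rw [projLP_eq_shift_of_strictMono hu, hmin, Fin.val_zero, shift_zero]

theorem projLP_shift_one (v : GaussCode n) :
    projLP (shift 1 v) = projLP v ∨ projLP (shift 1 v) = shiftLP (projLP v) := by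
  set u := permAct (Tuple.sort (posL v))⁻¹ v
  have hu : StrictMono (posL u) := strictMono_posL_permAct_sort v
  rw [← projLP_permAct (Tuple.sort (posL v))⁻¹ v, ← projLP_permAct (Tuple.sort (posL v))⁻¹,
    permAct_shift]
  cases h : (u 0).2
  · exact Or.inr (by rw [projLP_of_snd_eq_false hu h, shiftLP])
  · exact Or.inl (projLP_shift_one_of_snd_eq_true hu h)

theorem exists_projLP_shift_eq_iterate (v : GaussCode n) (m : ℕ) :
    ∃ k, projLP (shift m v) = shiftLP^[k] (projLP v) := by
  induction m with
  | zero => exact ⟨0, by rw [shift_zero, Function.iterate_zero_apply]⟩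
  | succ m ih =>
    obtain ⟨k, hk⟩ := ih
    rw [add_comm, ← shift_shift]
    rcases projLP_shift_one (shift m v) with h | h
    · exact ⟨k, by rw [h, hk]⟩
    · exact ⟨k + 1, by rw [h, hk, Function.iterate_succ_apply']⟩

theorem exists_iterate_eq_projLP_shift (v : GaussCode n) (k : ℕ) :
    ∃ m, shiftLP^[k] (projLP v) = projLP (shift m v) := by
  induction k with
  | zero => exact ⟨0, by rw [Function.iterate_zero_apply, shift_zero]⟩
  | succ k ih =>
    obtain ⟨m, hm⟩ := ih
    obtain ⟨c, π, hc⟩ := exists_projLP_eq (shift m v)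
    refine ⟨1 + c + m, ?_⟩
    rw [Function.iterate_succ_apply', hm, shiftLP, hc, shift_shift, ← permAct_shift,
      projLP_permAct, shift_shift]

theorem orientedEquiv_iff_exists_iterate {v u : GaussCode n} (hu : IsLeftPreferred u) :
    OrientedEquiv v u ↔ ∃ k, u = shiftLP^[k] (projLP v) := by
  constructor
  · rintro ⟨π, m, rfl⟩
    obtain ⟨k, hk⟩ := exists_projLP_shift_eq_iterate v m
    exact ⟨k, by rw [← projLP_eq_self hu, ← permAct_shift, projLP_permAct, hk]⟩
  · rintro ⟨k, rfl⟩
    obtain ⟨m, hm⟩ := exists_iterate_eq_projLP_shift v k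
    obtain ⟨c, π, hc⟩ := exists_projLP_eq (shift m v)
    exact ⟨π, c + m, by rw [hm, hc, permAct_shift, shift_shift]⟩

theorem OrientedEquiv.rev {v u : GaussCode n} (h : OrientedEquiv v u) :
    OrientedEquiv (rev v) (rev u) := by
  obtain ⟨π, m, rfl⟩ := h
  exact ⟨π, _, by rw [rev_shift, rev_permAct]⟩

theorem orientedEquiv_rev_iff {v u : GaussCode n} :
    OrientedEquiv v (rev u) ↔ OrientedEquiv (rev v) u :=
  ⟨fun h => rev_rev u ▸ h.rev, fun h => rev_rev v ▸ h.rev⟩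

end GaussCode

open GaussCode in
/-- for left preferred Gauss codes, oriented (resp. unoriented)
equivalence as Gauss codes coincides with lying in the same `shift^LP`-orbit
(resp. in the `shift^LP`-orbit of the code or of its `rev^LP`). -/
theorem stmt8 (n : ℕ) [NeZero n] (w w' : GaussCode n)
    (hw : IsLeftPreferred w) (hw' : IsLeftPreferred w') :
    (OrientedEquiv w w' ↔ ∃ k : ℕ, w' = shiftLP^[k] w) ∧
    (UnorientedEquiv w w' ↔
      ∃ k : ℕ, w' = shiftLP^[k] w ∨ w' = shiftLP^[k] (revLP w)) := by
  have oriented : OrientedEquiv w w' ↔ ∃ k : ℕ, w' = shiftLP^[k] w := by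
    rw [orientedEquiv_iff_exists_iterate hw', projLP_eq_self hw]
  have reversed : OrientedEquiv (rev w) w' ↔ ∃ k : ℕ, w' = shiftLP^[k] (revLP w) :=
    orientedEquiv_iff_exists_iterate hw'
  rw [UnorientedEquiv, orientedEquiv_rev_iff, oriented, reversed, exists_or]
  exact ⟨Iff.rfl, Iff.rfl⟩
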